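/- Let X = U = Y = [0,1], c(x,u) = (x−u)², P = ½δ_{1/2} + ½δ_1, P_n = ½δ_{1/2 − 1/n} + ½δ_1, and let Q be the quantizer kernel Q(0|x) = 1_{x ∈ [0,1/2)}, Q(1|x) = 1_{x ∈ [1/2,1]} with output space {0,1}. Then P_n → P weakly, J*(P_n,Q) = 0 for all n ≥ 3, and J*(P,Q) = 1/16. Hence the optimal cost is discontinuous in the prior under weak convergence for quantizer channels. -/

import Mathlib

open MeasureTheory ProbabilityTheory Filter
open scoped ENNReal

namespace Stmt8

/-- The quantizer map: `q(x) = 0` if `x ∈ [0,1/2)` (i.e. `x < 1/2`) and `q(x) = 1` if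
`x ∈ [1/2,1]`. -/
noncomputable def q (x : ℝ) : ℝ := if x < 1/2 then 0 else 1

lemma q_measurable : Measurable q :=
  Measurable.ite (measurableSet_lt measurable_id measurable_const)
    measurable_const measurable_const

/-- The quantizer channel `Q(·|x) = δ_{q(x)}`. -/
noncomputable def Q : Kernel ℝ ℝ := Kernel.deterministic q q_measurable

/-- The expected cost `J(P,Q,γ) = E[(X − γ(Y))²]`. -/
noncomputable def J (P : Measure ℝ) (γ : ℝ → ℝ) : ℝ :=
  ∫ p : ℝ × ℝ, (p.1 - γ p.2) ^ 2 ∂(P ⊗ₘ Q)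

/-- Admissible policies: measurable maps with values in `U = [0,1]`. -/
def Pol : Type := {γ : ℝ → ℝ // Measurable γ ∧ ∀ y, γ y ∈ Set.Icc (0:ℝ) 1}

/-- The optimal cost `J*(P,Q)`. -/
noncomputable def Jstar (P : Measure ℝ) : ℝ := ⨅ γ : Pol, J P γ.1

/-- The prior `P = ½ δ_{1/2} + ½ δ_1`. -/
noncomputable def Plim : Measure ℝ :=
  (2:ℝ≥0∞)⁻¹ • Measure.dirac (1/2) + (2:ℝ≥0∞)⁻¹ • Measure.dirac 1

/-- The priors `P_n = ½ δ_{1/2 − 1/n} + ½ δ_1`. -/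
noncomputable def Pn (n : ℕ) : Measure ℝ :=
  (2:ℝ≥0∞)⁻¹ • Measure.dirac (1/2 - (n:ℝ)⁻¹) + (2:ℝ≥0∞)⁻¹ • Measure.dirac 1

/-!
Both priors are two-point measures, so every cost is an explicit two-term sum. Under `P_n` the
atoms `1/2 - 1/n` and `1` fall into different quantizer cells, so the policy returning the atom of
each cell has cost `0`. Under `P` both atoms lie in the cell `[1/2, 1]`, every policy uses one
estimate `t` for both, and `½(1/2 - t)² + ½(1 - t)² = (t - 3/4)² + 1/16`.
-/

open scoped Topology

instance : IsMarkovKernel Q := by unfold Q; infer_instance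

section HalfDirac

variable {α E : Type*} [MeasurableSpace α] [MeasurableSingletonClass α]
  [NormedAddCommGroup E] [NormedSpace ℝ E] [CompleteSpace E]

lemma integral_half_dirac_add_half_dirac (f : α → E) (a b : α) :
    ∫ x, f x ∂((2:ℝ≥0∞)⁻¹ • Measure.dirac a + (2:ℝ≥0∞)⁻¹ • Measure.dirac b)
      = (1/2 : ℝ) • f a + (1/2 : ℝ) • f b := by
  have hint : ∀ c : α, Integrable f ((2:ℝ≥0∞)⁻¹ • Measure.dirac c) := fun c =>
    (integrable_dirac enorm_lt_top).smul_measure (by simp)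
  rw [integral_add_measure (hint a) (hint b), integral_smul_measure, integral_smul_measure,
    integral_dirac, integral_dirac]
  norm_num

lemma tendsto_integral_half_dirac_add_half_dirac [TopologicalSpace α] {ι : Type*}
    {l : Filter ι} {x : ι → α} {a : α} (hx : Tendsto x l (𝓝 a)) (b : α) {f : α → E}
    (hf : ContinuousAt f a) :
    Tendsto
      (fun i => ∫ y, f y ∂((2:ℝ≥0∞)⁻¹ • Measure.dirac (x i) + (2:ℝ≥0∞)⁻¹ • Measure.dirac b)) l
      (𝓝 (∫ y, f y ∂((2:ℝ≥0∞)⁻¹ • Measure.dirac a + (2:ℝ≥0∞)⁻¹ • Measure.dirac b))) := by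
  simp only [integral_half_dirac_add_half_dirac]
  exact ((hf.tendsto.comp hx).const_smul _).add tendsto_const_nhds

end HalfDirac

lemma Measure.dirac_compProd_deterministic {α β : Type*} [MeasurableSpace α]
    [MeasurableSpace β] {f : α → β} (hf : Measurable f) (a : α) :
    Measure.dirac a ⊗ₘ Kernel.deterministic f hf = Measure.dirac (a, f a) := by
  rw [Measure.compProd_deterministic]
  exact Measure.map_dirac' (measurable_id.prodMk hf) a

lemma J_nonneg (P : Measure ℝ) (γ : ℝ → ℝ) : 0 ≤ J P γ :=
  integral_nonneg fun _ => sq_nonneg _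

lemma J_half_dirac_add_half_dirac (a b : ℝ) (γ : ℝ → ℝ) :
    J ((2:ℝ≥0∞)⁻¹ • Measure.dirac a + (2:ℝ≥0∞)⁻¹ • Measure.dirac b) γ
      = (1/2) * (a - γ (q a)) ^ 2 + (1/2) * (b - γ (q b)) ^ 2 := by
  rw [J, Measure.compProd_add_left, Measure.compProd_smul_left, Measure.compProd_smul_left, Q,
    Measure.dirac_compProd_deterministic, Measure.dirac_compProd_deterministic,
    integral_half_dirac_add_half_dirac, smul_eq_mul, smul_eq_mul]

lemma Jstar_eq_of_forall_le {P : Measure ℝ} {c : ℝ} (hle : ∀ γ : Pol, c ≤ J P γ.1)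
    (γ₀ : Pol) (hγ₀ : J P γ₀.1 = c) : Jstar P = c :=
  have : Nonempty Pol := ⟨γ₀⟩
  le_antisymm (hγ₀ ▸ ciInf_le ⟨c, Set.forall_mem_range.2 hle⟩ γ₀) (le_ciInf hle)

noncomputable def Pol.ofValues (u v : ℝ) (hu : u ∈ Set.Icc (0:ℝ) 1) (hv : v ∈ Set.Icc (0:ℝ) 1) :
    Pol :=
  ⟨fun y => if y = 0 then u else v,
    Measurable.ite (measurableSet_singleton 0) measurable_const measurable_const,
    fun y => by beta_reduce; split_ifs <;> assumption⟩

lemma q_of_lt {x : ℝ} (hx : x < 1/2) : q x = 0 := if_pos hx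

lemma q_of_le {x : ℝ} (hx : 1/2 ≤ x) : q x = 1 := if_neg hx.not_gt

/-- `P_n → P` weakly, `J*(P_n,Q) = 0` for `n ≥ 3`, but `J*(P,Q) = 1/16`: the optimal cost
is discontinuous in the prior under weak convergence for quantizer channels. -/
theorem not_weakly_continuous_quantizer :
    (∀ f : BoundedContinuousFunction ℝ ℝ,
      Tendsto (fun n => ∫ x, f x ∂(Pn n)) atTop (nhds (∫ x, f x ∂Plim))) ∧
    (∀ n : ℕ, 3 ≤ n → Jstar (Pn n) = 0) ∧
    Jstar Plim = 1 / 16 := by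
  have hq1 : q 1 = 1 := q_of_le (by norm_num)
  refine ⟨fun f => ?_, fun n hn => ?_, ?_⟩
  · have hx : Tendsto (fun n : ℕ => 1/2 - (n:ℝ)⁻¹) atTop (𝓝 (1/2)) := by
      simpa using tendsto_const_nhds.sub (tendsto_inv_atTop_nhds_zero_nat (𝕜 := ℝ))
    exact tendsto_integral_half_dirac_add_half_dirac hx 1 f.continuous.continuousAt
  · have hn_pos : 0 < (n:ℝ)⁻¹ := by positivity
    have hn_le : (n:ℝ)⁻¹ ≤ 2⁻¹ := inv_anti₀ two_pos (by exact_mod_cast (by omega : 2 ≤ n))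
    have ha : 1/2 - (n:ℝ)⁻¹ ∈ Set.Icc (0:ℝ) 1 := ⟨by linarith, by linarith⟩
    refine Jstar_eq_of_forall_le (fun γ => J_nonneg _ _)
      (Pol.ofValues _ 1 ha ⟨zero_le_one, le_rfl⟩) ?_
    rw [Pn, J_half_dirac_add_half_dirac, q_of_lt (by linarith), hq1]
    simp [Pol.ofValues]
  · have hJ : ∀ γ : ℝ → ℝ, J Plim γ = (γ 1 - 3/4) ^ 2 + 1/16 := fun γ => by
      rw [Plim, J_half_dirac_add_half_dirac, q_of_le le_rfl, hq1]; ring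
    refine Jstar_eq_of_forall_le (fun γ => hJ γ.1 ▸ le_add_of_nonneg_left (sq_nonneg _))
      (Pol.ofValues (3/4) (3/4) ⟨by norm_num, by norm_num⟩ ⟨by norm_num, by norm_num⟩) ?_
    rw [hJ]; simp [Pol.ofValues]

end Stmt8
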